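/- arXiv:1801.00110 — 3 statements merged into one kernel-verified Lean document; each statement's English description precedes it below -/
import Mathlib

section
/- If A and B are trees rooted at s such that both are subtrees of a common shortest-path tree SPT rooted at s, then the grafted graph A ⊕ B is also a subtree of SPT; in particular A ⊕ B is acyclic. -/
namespace SimpleGraph.Subgraph

variable {V : Type*} {G : SimpleGraph V}

theorem Connected.sup_biSup {ι : Type*} {A : G.Subgraph} {H : ι → G.Subgraph} {S : Set ι}
    (hA : A.Connected) (hH : ∀ i ∈ S, (H i).Connected)
    (hmeet : ∀ i ∈ S, (A ⊓ H i).verts.Nonempty) :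
    (A ⊔ ⨆ i ∈ S, H i).Connected := by
  rw [Subgraph.connected_iff', connected_iff_exists_forall_reachable]
  obtain ⟨a, ha⟩ := hA.nonempty
  refine ⟨⟨a, Or.inl ha⟩, ?_⟩
  rintro ⟨v, hv | hv⟩
  · exact Reachable.map (inclusion le_sup_left) (hA.preconnected ⟨a, ha⟩ ⟨v, hv⟩)
  · simp only [verts_iSup, Set.mem_iUnion] at hv
    obtain ⟨i, hi, hv⟩ := hv
    have hAHi : (A ⊔ H i).Connected :=
      connected_sup hA.preconnected (hH i hi).preconnected (hmeet i hi)
    exact Reachable.map (inclusion (sup_le_sup_left (le_biSup H hi) A))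
      (hAHi.preconnected ⟨a, Or.inl ha⟩ ⟨v, Or.inr hv⟩)

end SimpleGraph.Subgraph

theorem stmt_8_general {V : Type*} (SPT : SimpleGraph V) (hSPT : SPT.IsTree)
    (A B : SPT.Subgraph) (hA : A.Connected) (DB : Set V)
    (u : V → V) (W : (d : V) → SPT.Walk (u d) d)
    (hu : ∀ d ∈ DB, u d ∈ A.verts ∧ u d ∈ B.verts) :
    (A ⊔ ⨆ d ∈ DB, (W d).toSubgraph).Connected ∧
    ((A ⊔ ⨆ d ∈ DB, (W d).toSubgraph).coe).IsAcyclic :=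
  ⟨hA.sup_biSup (fun d _ => (W d).toSubgraph_connected)
      (fun d hd => ⟨u d, (hu d hd).1, (W d).start_mem_verts_toSubgraph⟩),
    hSPT.isAcyclic.subgraph _⟩

/-- If `A` and `B` are subtrees of a common shortest-path tree `SPT` rooted at `s`,
then the grafted graph `A ⊕ B` is also a subtree of `SPT`; in particular it is
connected and acyclic. -/
theorem stmt_8 {V : Type*} (SPT : SimpleGraph V) (hSPT : SPT.IsTree) (s : V)
    (A B : SPT.Subgraph) (hA : A.Connected) (hB : B.Connected)
    (hsA : s ∈ A.verts) (hsB : s ∈ B.verts) (DB : Set V) (hDB : DB ⊆ B.verts)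
    (u : V → V) (W : (d : V) → SPT.Walk (u d) d)
    (hu : ∀ d ∈ DB, u d ∈ A.verts ∧ u d ∈ B.verts)
    (hWB : ∀ d ∈ DB, (W d).toSubgraph ≤ B)
    (hint : ∀ d ∈ DB, ∀ y ∈ (W d).support, y ≠ u d → y ∉ A.verts) :
    (A ⊔ ⨆ d ∈ DB, (W d).toSubgraph).Connected ∧
    ((A ⊔ ⨆ d ∈ DB, (W d).toSubgraph).coe).IsAcyclic :=
  stmt_8_general SPT hSPT A B hA DB u W hu
end

section
/- Let m ≥ 2 be an integer, α > 0 a real, and p ≥ 1 an integer. Then 2·Σ_{i=1}^{m^{p+1}} (i + (⌊i/m⌋ + 1)·α) ≥ 2m^p·(m(m+1)/2 + αm) + m^{p+1}(m^p − 1)(m + α). -/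
/-! The sum can be evaluated exactly: `Σ i = N(N+1)/2` for `N = m^(p+1)`, and `⌊i/m⌋` is constant
equal to `k` on each block `[mk, mk + m)`, so `Σ ⌊i/m⌋` is `m` times a triangular number plus the
last term `m^p`. The two sides then differ by exactly `2α m^p > 0`. -/

open Finset

theorem Finset.sum_range_succ_eq_add_sum_Icc_one {M : Type*} [AddCommMonoid M] (f : ℕ → M) (n : ℕ) :
    ∑ i ∈ range (n + 1), f i = f 0 + ∑ i ∈ Icc 1 n, f i := by
  rw [range_eq_Ico, sum_eq_sum_Ico_succ_bot n.succ_pos, zero_add, Nat.succ_eq_add_one,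
    Ico_add_one_right_eq_Icc]

theorem two_mul_sum_Icc_one_id (n : ℕ) : 2 * ∑ i ∈ Icc 1 n, i = n * (n + 1) := by
  have h := sum_range_id_mul_two (n + 1)
  rw [sum_range_succ_eq_add_sum_Icc_one, Nat.add_sub_cancel] at h
  linarith

theorem two_mul_sum_range_mul_div {m : ℕ} (hm : 0 < m) (K : ℕ) :
    2 * ∑ i ∈ range (m * K), i / m + m * K = m * K * K := by
  induction K with
  | zero => simp
  | succ K ih =>
    have hblock : ∑ j ∈ range m, (m * K + j) / m = m * K := by
      rw [sum_congr rfl fun j hj => by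
        rw [Nat.mul_add_div hm, Nat.div_eq_of_lt (mem_range.mp hj), add_zero], sum_const,
        card_range, smul_eq_mul]
    rw [mul_add_one, sum_range_add, hblock]
    nlinarith [ih]

theorem two_mul_sum_Icc_one_mul_div {m : ℕ} (hm : 0 < m) (K : ℕ) :
    2 * ∑ i ∈ Icc 1 (m * K), i / m + m * K = m * K * K + 2 * K := by
  have h := sum_range_succ (· / m) (m * K)
  rw [sum_range_succ_eq_add_sum_Icc_one, Nat.mul_div_cancel_left _ hm] at h
  simp only [Nat.zero_div, zero_add] at h
  rw [h]
  linarith [two_mul_sum_range_mul_div hm K]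

theorem stmt_15_general (m p : ℕ) (hm : 2 ≤ m) (α : ℝ) (hα : 0 < α) :
    2 * (m : ℝ) ^ p * (((m : ℝ) * ((m : ℝ) + 1)) / 2 + α * (m : ℝ)) +
      (m : ℝ) ^ (p + 1) * ((m : ℝ) ^ p - 1) * ((m : ℝ) + α) ≤
    2 * ∑ i ∈ Finset.Icc 1 (m ^ (p + 1)), ((i : ℝ) + (((i / m : ℕ) : ℝ) + 1) * α) := by
  have hN : m ^ (p + 1) = m * m ^ p := pow_succ' m p
  have hid : (2 * ∑ i ∈ Icc 1 (m ^ (p + 1)), i : ℕ) = m ^ (p + 1) * (m ^ (p + 1) + 1) :=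
    two_mul_sum_Icc_one_id _
  have hdiv := two_mul_sum_Icc_one_mul_div (by omega : 0 < m) (m ^ p)
  rw [← hN] at hdiv
  have hsplit : ∑ i ∈ Icc 1 (m ^ (p + 1)), ((i : ℝ) + (((i / m : ℕ) : ℝ) + 1) * α)
      = ((∑ i ∈ Icc 1 (m ^ (p + 1)), i : ℕ) : ℝ)
        + ((∑ i ∈ Icc 1 (m ^ (p + 1)), i / m : ℕ) : ℝ) * α + ((m ^ (p + 1) : ℕ) : ℝ) * α := by
    simp only [add_mul, one_mul, sum_add_distrib, ← sum_mul, sum_const, Nat.card_Icc,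
      nsmul_eq_mul, Nat.cast_sum, Nat.add_sub_cancel]
    ring
  have hidR := congrArg (Nat.cast : ℕ → ℝ) hid
  have hdivR := congrArg (Nat.cast : ℕ → ℝ) hdiv
  push_cast at hidR hdivR hsplit
  rw [hsplit]
  have hgap : 0 < α * (m : ℝ) ^ p := by positivity
  linear_combination (-1 : ℝ) * hidR - α * hdivR + 2 * hgap

/-- Summation lower bound in the necessary direction of the hardness reduction:
`2 Σ_{i=1}^{m^{p+1}} (i + (⌊i/m⌋+1) α) ≥ 2 m^p (m(m+1)/2 + α m) + m^{p+1}(m^p−1)(m+α)`. -/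
theorem stmt_15 (m p : ℕ) (hm : 2 ≤ m) (hp : 1 ≤ p) (α : ℝ) (hα : 0 < α) :
    2 * (m : ℝ) ^ p * (((m : ℝ) * ((m : ℝ) + 1)) / 2 + α * (m : ℝ)) +
      (m : ℝ) ^ (p + 1) * ((m : ℝ) ^ p - 1) * ((m : ℝ) + α) ≤
    2 * ∑ i ∈ Finset.Icc 1 (m ^ (p + 1)), ((i : ℝ) + (((i / m : ℕ) : ℝ) + 1) * α) :=
  stmt_15_general m p hm α hα
end

section
/- Let G be a graph with nonnegative edge weights and let A = {V_A, E_A} contain a connected subgraph B. In the contraction A·B, where all vertices of B are merged into a single vertex u and, for each neighbor v of u, only a minimum-weight edge among the edges between B and v is kept, the distance from u to any vertex v ∉ V_B in A·B equals min_{b ∈ V_B} of the minimum over paths in A from b to v that use no internal vertex of B. -/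
/-!
Send every vertex of `B` to `u`. An admissible path of `A`, which meets `B` only in its
starting vertex `b`, then becomes a walk of `A·B` from `u` to `v`: its edges out of `b`
become edges out of `u`, which cost at most as much since the kept edge has minimum weight.
Conversely, the bypass of a walk of `A·B` from `u` to `v` is no heavier (weights are
nonnegative) and, being a path, leaves `u` once and never returns. Its tail is a walk of
`A` avoiding `B`, and its first edge `u a` is approximated, to within any `ε > 0`, by an
edge `b a` of `A` with `b ∈ B`, because its weight is an infimum over such edges.
-/

theorem Real.sInf_eq_sInf_of_forall_exists_le {L R : Set ℝ} (hL : BddBelow L)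
    (hR : BddBelow R) (hRL : ∀ y ∈ R, ∃ x ∈ L, x ≤ y)
    (hLR : ∀ x ∈ L, ∀ ε > 0, ∃ y ∈ R, y ≤ x + ε) : sInf L = sInf R := by
  rcases L.eq_empty_or_nonempty with rfl | hLne
  · have hRe : R = ∅ := Set.eq_empty_of_forall_notMem fun y hy => by
      simpa using hRL y hy
    rw [hRe]
  obtain ⟨x, hx⟩ := hLne
  obtain ⟨y, hy, -⟩ := hLR x hx 1 one_pos
  apply le_antisymm
  · refine le_csInf ⟨y, hy⟩ fun y hy => ?_
    obtain ⟨x, hx, hxy⟩ := hRL y hy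
    exact (csInf_le hL hx).trans hxy
  · refine le_csInf ⟨x, hx⟩ fun x hx => le_of_forall_pos_le_add fun ε hε => ?_
    obtain ⟨y, hy, hyx⟩ := hLR x hx ε hε
    exact (csInf_le hR hy).trans hyx

namespace SimpleGraph.Walk

variable {W : Type*} {G : SimpleGraph W}

def dartWeight (f : W → W → ℝ) {s t : W} (p : G.Walk s t) : ℝ :=
  (p.darts.map fun d => f d.toProd.1 d.toProd.2).sum

@[simp]
lemma dartWeight_nil (f : W → W → ℝ) {s : W} : (nil : G.Walk s s).dartWeight f = 0 := rfl

@[simp]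
lemma dartWeight_cons (f : W → W → ℝ) {s t u : W} (h : G.Adj s t) (p : G.Walk t u) :
    (cons h p).dartWeight f = f s t + p.dartWeight f := by
  simp [dartWeight]

lemma dartWeight_nonneg {f : W → W → ℝ} (hf : ∀ x y, G.Adj x y → 0 ≤ f x y) {s t : W}
    (p : G.Walk s t) : 0 ≤ p.dartWeight f :=
  List.sum_nonneg (by simpa using fun d _ => hf _ _ d.adj)

lemma dartWeight_bypass_le [DecidableEq W] {f : W → W → ℝ}
    (hf : ∀ x y, G.Adj x y → 0 ≤ f x y) {s t : W} (p : G.Walk s t) :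
    p.bypass.dartWeight f ≤ p.dartWeight f :=
  (p.darts_bypass_sublist_darts.map _).sum_le_sum (by simpa using fun d _ => hf _ _ d.adj)

end SimpleGraph.Walk

open SimpleGraph

universe u

section Contraction

variable {V : Type*}

/-- `C` with weights `f` is `A · B` for `B` spanned by `VB`; the merged vertex `u` is
`.inr PUnit.unit`. -/
structure IsMinWeightContraction (A : SimpleGraph V) (w : Sym2 V → ℝ) (VB : Set V)
    (C : SimpleGraph ({v : V // v ∉ VB} ⊕ PUnit.{u + 1}))
    (f : ({v : V // v ∉ VB} ⊕ PUnit.{u + 1}) →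
      ({v : V // v ∉ VB} ⊕ PUnit.{u + 1}) → ℝ) : Prop where
  adj_inl_inl : ∀ a b : {v : V // v ∉ VB}, C.Adj (.inl a) (.inl b) ↔ A.Adj a.1 b.1
  adj_inl_inr : ∀ a : {v : V // v ∉ VB},
    C.Adj (.inl a) (.inr PUnit.unit) ↔ ∃ c ∈ VB, A.Adj c a.1
  weight_inl_inl : ∀ a b : {v : V // v ∉ VB}, f (.inl a) (.inl b) = w s(a.1, b.1)
  weight_inl_inr : ∀ a : {v : V // v ∉ VB}, f (.inl a) (.inr PUnit.unit) =
    sInf {x | ∃ c ∈ VB, A.Adj c a.1 ∧ x = w s(c, a.1)}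
  weight_comm : ∀ x y, f x y = f y x

open Classical in
noncomputable def contractVertex (VB : Set V) (x : V) : {v : V // v ∉ VB} ⊕ PUnit :=
  if hx : x ∈ VB then .inr PUnit.unit else .inl ⟨x, hx⟩

lemma contractVertex_of_mem {VB : Set V} {x : V} (hx : x ∈ VB) :
    contractVertex VB x = .inr PUnit.unit := by
  simp [contractVertex, hx]

lemma contractVertex_of_notMem {VB : Set V} {x : V} (hx : x ∉ VB) :
    contractVertex VB x = .inl ⟨x, hx⟩ := by
  simp [contractVertex, hx]

namespace IsMinWeightContraction

variable {A : SimpleGraph V} {w : Sym2 V → ℝ} {VB : Set V}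
  {C : SimpleGraph ({v : V // v ∉ VB} ⊕ PUnit.{u + 1})}
  {f : ({v : V // v ∉ VB} ⊕ PUnit.{u + 1}) → ({v : V // v ∉ VB} ⊕ PUnit.{u + 1}) → ℝ}

lemma weight_nonneg (hC : IsMinWeightContraction A w VB C f) (hw : ∀ e, 0 ≤ w e) :
    ∀ x y, C.Adj x y → 0 ≤ f x y := by
  have hinr : ∀ a, 0 ≤ f (.inl a) (.inr PUnit.unit) := fun a => by
    rw [hC.weight_inl_inr]
    exact Real.sInf_nonneg (by rintro _ ⟨c, -, -, rfl⟩; exact hw _)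
  rintro (a | ⟨⟩) (b | ⟨⟩) h
  · rw [hC.weight_inl_inl]; exact hw _
  · exact hinr a
  · rw [hC.weight_comm]; exact hinr b
  · exact absurd h C.irrefl

lemma weight_inl_inr_le (hC : IsMinWeightContraction A w VB C f) (hw : ∀ e, 0 ≤ w e)
    {a : {v : V // v ∉ VB}} {c : V} (hc : c ∈ VB) (hca : A.Adj c a.1) :
    f (.inl a) (.inr PUnit.unit) ≤ w s(c, a.1) := by
  rw [hC.weight_inl_inr]
  exact csInf_le ⟨0, by rintro _ ⟨c, -, -, rfl⟩; exact hw _⟩ ⟨c, hc, hca, rfl⟩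

lemma exists_lt_weight_inl_inr_add (hC : IsMinWeightContraction A w VB C f)
    {a : {v : V // v ∉ VB}} (ha : C.Adj (.inl a) (.inr PUnit.unit)) {ε : ℝ} (hε : 0 < ε) :
    ∃ c ∈ VB, A.Adj c a.1 ∧ w s(c, a.1) < f (.inl a) (.inr PUnit.unit) + ε := by
  obtain ⟨c, hc, hca⟩ := (hC.adj_inl_inr a).1 ha
  rw [hC.weight_inl_inr]
  obtain ⟨_, ⟨c, hc, hca, rfl⟩, hlt⟩ :=
    Real.lt_sInf_add_pos (s := {x | ∃ c ∈ VB, A.Adj c a.1 ∧ x = w s(c, a.1)})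
      ⟨_, c, hc, hca, rfl⟩ hε
  exact ⟨c, hc, hca, hlt⟩

lemma adj_contractVertex (hC : IsMinWeightContraction A w VB C f) (hw : ∀ e, 0 ≤ w e)
    {x y : V} (hxy : A.Adj x y) (hout : x ∉ VB ∨ y ∉ VB) :
    C.Adj (contractVertex VB x) (contractVertex VB y) ∧
      f (contractVertex VB x) (contractVertex VB y) ≤ w s(x, y) := by
  by_cases hx : x ∈ VB <;> by_cases hy : y ∈ VB
  · simp_all
  · rw [contractVertex_of_mem hx, contractVertex_of_notMem hy, hC.weight_comm]
    exact ⟨((hC.adj_inl_inr _).2 ⟨x, hx, hxy⟩).symm, hC.weight_inl_inr_le hw hx hxy⟩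
  · rw [contractVertex_of_notMem hx, contractVertex_of_mem hy, Sym2.eq_swap]
    exact ⟨(hC.adj_inl_inr _).2 ⟨y, hy, hxy.symm⟩, hC.weight_inl_inr_le hw hy hxy.symm⟩
  · rw [contractVertex_of_notMem hx, contractVertex_of_notMem hy]
    exact ⟨(hC.adj_inl_inl _ _).2 hxy, (hC.weight_inl_inl _ _).le⟩

lemma exists_walk_contractVertex_dartWeight_le (hC : IsMinWeightContraction A w VB C f)
    (hw : ∀ e, 0 ≤ w e) {x z : V} (q : A.Walk x z)
    (hq : ∀ d ∈ q.darts, d.fst ∉ VB ∨ d.snd ∉ VB) :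
    ∃ p : C.Walk (contractVertex VB x) (contractVertex VB z),
      p.dartWeight f ≤ (q.edges.map w).sum := by
  induction q with
  | nil => exact ⟨.nil, by simp⟩
  | @cons x' y' _ h q ih =>
    obtain ⟨hadj, hle⟩ := hC.adj_contractVertex hw h (hq ⟨(x', y'), h⟩ (by simp))
    obtain ⟨p, hp⟩ := ih fun d hd => hq d (by simp [hd])
    exact ⟨.cons hadj p, by simp only [Walk.dartWeight_cons, Walk.edges_cons,
      List.map_cons, List.sum_cons]; linarith⟩

lemma exists_walk_inr_dartWeight_le (hC : IsMinWeightContraction A w VB C f) (hw : ∀ e, 0 ≤ w e)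
    {b : V} (hb : b ∈ VB) {v : {v : V // v ∉ VB}} (q : A.Walk b v.1)
    (hq : ∀ y ∈ q.support, y ≠ b → y ∉ VB) :
    ∃ p : C.Walk (.inr PUnit.unit) (.inl v), p.dartWeight f ≤ (q.edges.map w).sum := by
  have hdarts : ∀ d ∈ q.darts, d.fst ∉ VB ∨ d.snd ∉ VB := by
    intro d hd
    by_contra! hin
    have hfst : d.fst = b :=
      by_contra fun hne => hq _ (q.dart_fst_mem_support_of_mem_darts hd) hne hin.1
    have hsnd : d.snd = b :=
      by_contra fun hne => hq _ (q.dart_snd_mem_support_of_mem_darts hd) hne hin.2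
    exact d.adj.ne (hfst.trans hsnd.symm)
  have key := hC.exists_walk_contractVertex_dartWeight_le hw q hdarts
  rwa [contractVertex_of_mem hb, contractVertex_of_notMem v.2] at key

lemma exists_walk_of_inr_notMem_support (hC : IsMinWeightContraction A w VB C f)
    {a z : {v : V // v ∉ VB}} (p : C.Walk (.inl a) (.inl z))
    (hp : .inr PUnit.unit ∉ p.support) :
    ∃ q : A.Walk a.1 z.1, (∀ y ∈ q.support, y ∉ VB) ∧
      (q.edges.map w).sum = p.dartWeight f := by
  suffices ∀ {s t} (p : C.Walk s t), .inr PUnit.unit ∉ p.support → ∀ a z, s = .inl a →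
      t = .inl z → ∃ q : A.Walk a.1 z.1, (∀ y ∈ q.support, y ∉ VB) ∧
        (q.edges.map w).sum = p.dartWeight f from this p hp a z rfl rfl
  intro s t p
  induction p with
  | nil =>
    rintro - a z rfl h
    obtain rfl := Sum.inl_injective h
    exact ⟨.nil, by simpa using a.2, by simp⟩
  | @cons _ t _ h p ih =>
    rintro hp a z rfl rfl
    simp only [Walk.support_cons, List.mem_cons, not_or] at hp
    rcases t with b | ⟨⟩
    · obtain ⟨q, hqout, hqw⟩ := ih hp.2 b z rfl rfl
      refine ⟨.cons ((hC.adj_inl_inl a b).1 h) q, ?_, ?_⟩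
      · simpa using ⟨a.2, hqout⟩
      · simp [hqw, hC.weight_inl_inl]
    · exact absurd p.start_mem_support hp.2

lemma exists_walk_lt_dartWeight_add (hC : IsMinWeightContraction A w VB C f)
    (hw : ∀ e, 0 ≤ w e) {v : {v : V // v ∉ VB}} (p : C.Walk (.inr PUnit.unit) (.inl v))
    {ε : ℝ} (hε : 0 < ε) :
    ∃ b ∈ VB, ∃ q : A.Walk b v.1, (∀ y ∈ q.support, y ≠ b → y ∉ VB) ∧
      (q.edges.map w).sum < p.dartWeight f + ε := by
  classical
  have hpath := p.bypass_isPath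
  have hle := Walk.dartWeight_bypass_le (hC.weight_nonneg hw) p
  generalize p.bypass = P at hpath hle
  cases P with
  | @cons _ t _ h rest =>
    rcases t with a | ⟨⟩
    · have hrest : .inr PUnit.unit ∉ rest.support := ((Walk.cons_isPath_iff h rest).1 hpath).2
      obtain ⟨q, hqout, hqw⟩ := hC.exists_walk_of_inr_notMem_support rest hrest
      obtain ⟨c, hc, hca, hlt⟩ := hC.exists_lt_weight_inl_inr_add h.symm hε
      refine ⟨c, hc, .cons hca q, ?_, ?_⟩
      · simp only [Walk.support_cons, List.mem_cons]
        rintro y (rfl | hy) hne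
        exacts [absurd rfl hne, hqout y hy]
      · simp only [Walk.dartWeight_cons, Walk.edges_cons, List.map_cons,
          List.sum_cons] at hle ⊢
        rw [hC.weight_comm] at hle
        linarith
    · exact absurd h C.irrefl

end IsMinWeightContraction

end Contraction

theorem stmt_17_general {V : Type*} (A : SimpleGraph V) (w : Sym2 V → ℝ) (hw : ∀ e, 0 ≤ w e)
    (VB : Set V)
    (C : SimpleGraph ({v : V // v ∉ VB} ⊕ PUnit))
    (hC1 : ∀ a b : {v : V // v ∉ VB}, C.Adj (.inl a) (.inl b) ↔ A.Adj a.1 b.1)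
    (hC2 : ∀ a : {v : V // v ∉ VB},
      C.Adj (.inl a) (.inr PUnit.unit) ↔ ∃ c ∈ VB, A.Adj c a.1)
    (f : ({v : V // v ∉ VB} ⊕ PUnit) → ({v : V // v ∉ VB} ⊕ PUnit) → ℝ)
    (hf1 : ∀ a b : {v : V // v ∉ VB}, f (.inl a) (.inl b) = w s(a.1, b.1))
    (hf2 : ∀ a : {v : V // v ∉ VB}, f (.inl a) (.inr PUnit.unit) =
      sInf {x | ∃ c ∈ VB, A.Adj c a.1 ∧ x = w s(c, a.1)})
    (hf3 : ∀ x y, f x y = f y x) :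
    ∀ v : {v : V // v ∉ VB},
      sInf {x | ∃ p : C.Walk (.inr PUnit.unit) (.inl v),
          x = (p.darts.map (fun d => f d.toProd.1 d.toProd.2)).sum} =
      sInf {x | ∃ b ∈ VB, ∃ p : A.Walk b v.1,
          (∀ y ∈ p.support, y ≠ b → y ∉ VB) ∧ x = (p.edges.map w).sum} := by
  intro v
  have hC : IsMinWeightContraction A w VB C f := ⟨hC1, hC2, hf1, hf2, hf3⟩
  refine Real.sInf_eq_sInf_of_forall_exists_le ?_ ?_ ?_ ?_
  · exact ⟨0, by rintro _ ⟨p, rfl⟩; exact Walk.dartWeight_nonneg (hC.weight_nonneg hw) p⟩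
  · exact ⟨0, by
      rintro _ ⟨b, -, q, -, rfl⟩
      exact List.sum_nonneg (by simpa using fun e _ => hw e)⟩
  · rintro _ ⟨b, hb, q, hq, rfl⟩
    obtain ⟨p, hp⟩ := hC.exists_walk_inr_dartWeight_le hw hb q hq
    exact ⟨_, ⟨p, rfl⟩, hp⟩
  · rintro _ ⟨p, rfl⟩ ε hε
    obtain ⟨b, hb, q, hq, hlt⟩ := hC.exists_walk_lt_dartWeight_add hw p hε
    exact ⟨_, ⟨b, hb, q, hq, rfl⟩, hlt.le⟩

/-- Contraction of a connected subgraph `B` (vertex set `VB`) of `A` into a single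
vertex `u`, keeping for each neighbor only a minimum-weight edge: the distance from
`u` to any vertex `v ∉ VB` in the contracted graph equals the infimum, over `b ∈ VB`
and paths in `A` from `b` to `v` using no internal vertex of `B`, of the path weight. -/
theorem stmt_17 {V : Type*} (A : SimpleGraph V) (w : Sym2 V → ℝ) (hw : ∀ e, 0 ≤ w e)
    (VB : Set V) (hVB : (A.induce VB).Connected)
    (C : SimpleGraph ({v : V // v ∉ VB} ⊕ PUnit))
    (hC1 : ∀ a b : {v : V // v ∉ VB}, C.Adj (.inl a) (.inl b) ↔ A.Adj a.1 b.1)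
    (hC2 : ∀ a : {v : V // v ∉ VB},
      C.Adj (.inl a) (.inr PUnit.unit) ↔ ∃ c ∈ VB, A.Adj c a.1)
    (hC3 : ¬ C.Adj (.inr PUnit.unit) (.inr PUnit.unit))
    (f : ({v : V // v ∉ VB} ⊕ PUnit) → ({v : V // v ∉ VB} ⊕ PUnit) → ℝ)
    (hf1 : ∀ a b : {v : V // v ∉ VB}, f (.inl a) (.inl b) = w s(a.1, b.1))
    (hf2 : ∀ a : {v : V // v ∉ VB}, f (.inl a) (.inr PUnit.unit) =
      sInf {x | ∃ c ∈ VB, A.Adj c a.1 ∧ x = w s(c, a.1)})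
    (hf3 : ∀ x y, f x y = f y x) :
    ∀ v : {v : V // v ∉ VB},
      sInf {x | ∃ p : C.Walk (.inr PUnit.unit) (.inl v),
          x = (p.darts.map (fun d => f d.toProd.1 d.toProd.2)).sum} =
      sInf {x | ∃ b ∈ VB, ∃ p : A.Walk b v.1,
          (∀ y ∈ p.support, y ≠ b → y ∉ VB) ∧ x = (p.edges.map w).sum} :=
  stmt_17_general A w hw VB C hC1 hC2 f hf1 hf2 hf3
end
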